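/- arXiv:1709.07235 — 4 statements merged into one kernel-verified Lean document; each statement's English description precedes it below -/
import Mathlib

section
/- Let P₀, P₁, …, P_m be a symmetric Clifford system on ℝ^{2l} (with l ≥ 1) and let F(x) = |x|⁴ − 2∑_{i=0}^{m} ⟨P_i x, x⟩² be the associated FKM polynomial. Then F satisfies the first Cartan–Münzner equation for g = 4: for every x ∈ ℝ^{2l}, |∇F(x)|² = 16|x|⁶, where ∇F denotes the Euclidean gradient of F. -/
/-!
The gradient of `F` is `4‖x‖²x - 8S` with `S = ∑ aᵢ Pᵢx`, `aᵢ = ⟪Pᵢx, x⟫`. The Clifford relations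
make the vectors `Pᵢx` pairwise orthogonal of length `‖x‖`, so `‖S‖² = (∑ aᵢ²)‖x‖²`, while
`⟪x, S⟫ = ∑ aᵢ²`; in `‖4‖x‖²x - 8S‖²` the cross term `-64‖x‖²∑ aᵢ²` then cancels `64‖S‖²`,
leaving `16‖x‖⁶`.
-/

open RealInnerProductSpace

variable {E : Type*} [NormedAddCommGroup E] [InnerProductSpace ℝ E]

structure IsSymmetricCliffordSystem {ι : Type*} [DecidableEq ι] (P : ι → E →ₗ[ℝ] E) : Prop where
  isSymmetric : ∀ i, (P i).IsSymmetric
  anticomm : ∀ i j, P i ∘ₗ P j + P j ∘ₗ P i =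
    if i = j then (2 : ℝ) • (LinearMap.id : E →ₗ[ℝ] E) else 0

namespace IsSymmetricCliffordSystem

variable {ι : Type*} [DecidableEq ι] {P : ι → E →ₗ[ℝ] E}

theorem inner_apply_apply (hP : IsSymmetricCliffordSystem P) (x : E) (i j : ι) :
    ⟪P i x, P j x⟫ = if i = j then ‖x‖ ^ 2 else 0 := by
  have h := congrArg (fun T : E →ₗ[ℝ] E => ⟪T x, x⟫) (hP.anticomm i j)
  simp only [LinearMap.add_apply, LinearMap.comp_apply, inner_add_left] at h
  rw [hP.isSymmetric i (P j x), hP.isSymmetric j (P i x),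
    real_inner_comm (P i x) (P j x)] at h
  split_ifs at h ⊢
  · simp only [LinearMap.smul_apply, LinearMap.id_apply, real_inner_smul_left,
      real_inner_self_eq_norm_sq] at h
    linarith
  · simp only [LinearMap.zero_apply, inner_zero_left] at h
    linarith

variable [Fintype ι]

theorem norm_sq_sum_smul_apply (hP : IsSymmetricCliffordSystem P) (c : ι → ℝ) (x : E) :
    ‖∑ i, c i • P i x‖ ^ 2 = (∑ i, c i ^ 2) * ‖x‖ ^ 2 := by
  rw [← real_inner_self_eq_norm_sq, sum_inner, Finset.sum_mul]
  refine Finset.sum_congr rfl fun i _ => ?_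
  simp only [inner_sum, real_inner_smul_left, real_inner_smul_right, hP.inner_apply_apply,
    mul_ite, mul_zero, Finset.sum_ite_eq, Finset.mem_univ, if_true]
  ring

theorem norm_sq_gradient_fkm (hP : IsSymmetricCliffordSystem P) (x : E) :
    ‖(4 * ‖x‖ ^ 2) • x - (8 : ℝ) • ∑ i, ⟪P i x, x⟫ • P i x‖ ^ 2 = 16 * ‖x‖ ^ 6 := by
  have hS := hP.norm_sq_sum_smul_apply (fun i => ⟪P i x, x⟫) x
  have hxS : ⟪x, ∑ i, ⟪P i x, x⟫ • P i x⟫ = ∑ i, ⟪P i x, x⟫ ^ 2 := by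
    simp only [inner_sum, real_inner_smul_right, real_inner_comm x, sq]
  rw [norm_sub_sq_real, norm_smul, norm_smul, mul_pow, mul_pow, hS, real_inner_smul_left,
    real_inner_smul_right, hxS, Real.norm_eq_abs, Real.norm_eq_abs, sq_abs, sq_abs]
  ring

end IsSymmetricCliffordSystem

theorem hasFDerivAt_inner_apply_self_sq {T : E →L[ℝ] E} (hT : (T : E →ₗ[ℝ] E).IsSymmetric)
    (x : E) :
    HasFDerivAt (fun y => ⟪T y, y⟫ ^ 2) ((4 * ⟪T x, x⟫) • innerSL ℝ (T x)) x := by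
  have h := (hT.hasStrictFDerivAt_reApplyInnerSelf x).hasFDerivAt.pow 2
  have hf : (fun y => ⟪T y, y⟫ ^ 2) = fun y => T.reApplyInnerSelf y ^ 2 := by
    funext y
    simp [T.reApplyInnerSelf_apply]
  rw [hf]
  refine h.congr_fderiv ?_
  ext y
  simp only [T.reApplyInnerSelf_apply, RCLike.re_to_real, Nat.add_one_sub_one, pow_one,
    nsmul_eq_mul, Nat.cast_ofNat, smul_apply, coe_innerSL_apply, smul_eq_mul]
  ring

theorem hasGradientAt_fkm [CompleteSpace E] {ι : Type*} [Fintype ι] {P : ι → E →L[ℝ] E}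
    (hsymm : ∀ i, (P i : E →ₗ[ℝ] E).IsSymmetric) (x : E) :
    HasGradientAt (fun y => ‖y‖ ^ 4 - 2 * ∑ i, ⟪P i y, y⟫ ^ 2)
      ((4 * ‖x‖ ^ 2) • x - (8 : ℝ) • ∑ i, ⟪P i x, x⟫ • P i x) x := by
  have hnorm := hasFDerivAt_inner_apply_self_sq (T := ContinuousLinearMap.id ℝ E)
    LinearMap.IsSymmetric.id x
  have hsum := HasFDerivAt.sum (u := Finset.univ) fun i _ =>
    hasFDerivAt_inner_apply_self_sq (hsymm i) x
  rw [hasGradientAt_iff_hasFDerivAt]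
  refine ((hnorm.sub (hsum.const_mul 2)).congr_fderiv ?_).congr_of_eventuallyEq
    (Filter.Eventually.of_forall fun y => ?_)
  · ext y
    simp only [ContinuousLinearMap.id_apply, real_inner_self_eq_norm_sq,
      sub_apply, smul_apply, coe_innerSL_apply,
      smul_eq_mul, sum_apply, Finset.mul_sum, map_sub, map_smul, map_sum,
      InnerProductSpace.toDual_apply_apply]
    ring_nf
  · simp only [ContinuousLinearMap.id_apply, real_inner_self_eq_norm_sq, Finset.sum_apply,
      Pi.sub_apply]
    ring

theorem fkm_first_cartan_munzner_general {l m : ℕ}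
    (P : Fin (m + 1) →
      (EuclideanSpace ℝ (Fin (2 * l)) →ₗ[ℝ] EuclideanSpace ℝ (Fin (2 * l))))
    (hsymm : ∀ i, (P i).IsSymmetric)
    (hcliff : ∀ i j, P i ∘ₗ P j + P j ∘ₗ P i =
      if i = j then (2 : ℝ) • (LinearMap.id :
        EuclideanSpace ℝ (Fin (2 * l)) →ₗ[ℝ] EuclideanSpace ℝ (Fin (2 * l))) else 0)
    (F : EuclideanSpace ℝ (Fin (2 * l)) → ℝ)
    (hF : ∀ x, F x = ‖x‖ ^ 4 - 2 * ∑ i, ⟪P i x, x⟫ ^ 2) :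
    ∀ x, ‖gradient F x‖ ^ 2 = 16 * ‖x‖ ^ 6 := by
  intro x
  let Q i := LinearMap.toContinuousLinearMap (P i)
  have hFQ : F = fun y => ‖y‖ ^ 4 - 2 * ∑ i, ⟪Q i y, y⟫ ^ 2 := funext hF
  rw [hFQ, (hasGradientAt_fkm (P := Q) hsymm x).gradient]
  exact IsSymmetricCliffordSystem.norm_sq_gradient_fkm ⟨hsymm, hcliff⟩ x

/-- The FKM polynomial of a symmetric Clifford system satisfies the first
Cartan–Münzner equation for `g = 4`: `|∇F(x)|² = 16 |x|⁶`. -/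
theorem fkm_first_cartan_munzner {l m : ℕ} (hl : 1 ≤ l)
    (P : Fin (m + 1) →
      (EuclideanSpace ℝ (Fin (2 * l)) →ₗ[ℝ] EuclideanSpace ℝ (Fin (2 * l))))
    (hsymm : ∀ i, (P i).IsSymmetric)
    (hcliff : ∀ i j, P i ∘ₗ P j + P j ∘ₗ P i =
      if i = j then (2 : ℝ) • (LinearMap.id :
        EuclideanSpace ℝ (Fin (2 * l)) →ₗ[ℝ] EuclideanSpace ℝ (Fin (2 * l))) else 0)
    (F : EuclideanSpace ℝ (Fin (2 * l)) → ℝ)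
    (hF : ∀ x, F x = ‖x‖ ^ 4 - 2 * ∑ i, ⟪P i x, x⟫ ^ 2) :
    ∀ x, ‖gradient F x‖ ^ 2 = 16 * ‖x‖ ^ 6 :=
  fkm_first_cartan_munzner_general P hsymm hcliff F hF
end

section
/- Let P₀, P₁, …, P_m be a symmetric Clifford system on ℝ^{2l} with m ≥ 1 and l ≥ 1, and let F(x) = |x|⁴ − 2∑_{i=0}^{m} ⟨P_i x, x⟩² be the associated FKM polynomial. Then F satisfies the second Cartan–Münzner equation for g = 4 with multiplicities (m₁, m₂) = (m, l−m−1): for every x ∈ ℝ^{2l}, ΔF(x) = 8(l − 2m − 1)|x|², where Δ denotes the Euclidean Laplacian (the trace of the Hessian). -/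
/-!
For a symmetric operator `A`, the gradient of `⟪A x, x⟫²` is `4 ⟪A x, x⟫ A x`, whose
derivative `4 ⟪A x, x⟫ A + 8 (A x) ⊗ (A x)` has trace `4 ⟪A x, x⟫ tr A + 8 ‖A x‖²`.
Apply this to `A = id` (which gives `‖x‖⁴`) and to each `P i`. The Clifford relations make
every `P i` an isometric involution, and, as `m ≥ 1` provides some `P j` anticommuting with
`P i`, a traceless one. Hence `ΔF(x) = (4 · 2l + 8) ‖x‖² - 2 (m + 1) · 8 ‖x‖²`.
-/

open RealInnerProductSpace

/-- The Euclidean Laplacian of a real function on an inner product space,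
defined as the trace of the Hessian (the derivative of the gradient). -/
noncomputable def euclideanLaplacian {E : Type*} [NormedAddCommGroup E]
    [InnerProductSpace ℝ E] [CompleteSpace E] (F : E → ℝ) (x : E) : ℝ :=
  LinearMap.trace ℝ E (fderiv ℝ (gradient F) x).toLinearMap

theorem LinearMap.trace_eq_zero_of_mul_eq_neg_mul {R M : Type*} [CommRing R]
    [NoZeroDivisors R] [CharZero R] [AddCommGroup M] [Module R M] [Module.Free R M]
    [Module.Finite R M]
    {A B : Module.End R M} (hB : B * B = 1) (hAB : A * B = -(B * A)) : trace R M A = 0 := by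
  refine CharZero.eq_neg_self_iff.1 ?_
  calc trace R M A = trace R M (A * B * B) := by rw [mul_assoc, hB, mul_one]
    _ = trace R M (B * (A * B)) := trace_mul_comm R _ _
    _ = -trace R M A := by rw [hAB, mul_neg, ← mul_assoc, hB, one_mul, map_neg]

theorem LinearMap.IsSymmetric.norm_map_of_involutive {E : Type*} [NormedAddCommGroup E]
    [InnerProductSpace ℝ E] {A : E →ₗ[ℝ] E} (hA : A.IsSymmetric)
    (hinv : Function.Involutive A) (x : E) : ‖A x‖ = ‖x‖ := by
  rw [← sq_eq_sq₀ (norm_nonneg _) (norm_nonneg _), ← real_inner_self_eq_norm_sq,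
    ← real_inner_self_eq_norm_sq, hA, hinv]

section Calculus

variable {E : Type*} [NormedAddCommGroup E] [InnerProductSpace ℝ E] [CompleteSpace E]
  {A : E →L[ℝ] E}

theorem euclideanLaplacian_eq_trace {F : E → ℝ} {G : E → E} {H : E →L[ℝ] E} {x : E}
    (hG : ∀ y, HasGradientAt F (G y) y) (hH : HasFDerivAt G H x) :
    euclideanLaplacian F x = LinearMap.trace ℝ E H := by
  rw [euclideanLaplacian, gradient_eq hG, hH.fderiv]

theorem hasGradientAt_inner_apply_self (hA : (A : E →ₗ[ℝ] E).IsSymmetric) (x : E) :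
    HasGradientAt (fun z ↦ ⟪A z, z⟫) ((2 : ℝ) • A x) x := by
  rw [hasGradientAt_iff_hasFDerivAt]
  refine (A.hasFDerivAt.inner ℝ (hasFDerivAt_id x)).congr_fderiv ?_
  ext v
  simp only [id_eq, ContinuousLinearMap.comp_apply, ContinuousLinearMap.prod_apply,
    ContinuousLinearMap.id_apply, fderivInnerCLM_apply, map_smul, smul_apply,
    InnerProductSpace.toDual_apply_apply, smul_eq_mul, two_mul, add_right_inj]
  rw [real_inner_comm]
  exact (hA x v).symm

theorem hasGradientAt_inner_apply_self_sq (hA : (A : E →ₗ[ℝ] E).IsSymmetric) (x : E) :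
    HasGradientAt (fun z ↦ ⟪A z, z⟫ ^ 2) ((4 * ⟪A x, x⟫) • A x) x := by
  rw [hasGradientAt_iff_hasFDerivAt]
  have hq := hasGradientAt_iff_hasFDerivAt.1 (hasGradientAt_inner_apply_self hA x)
  refine (hq.pow 2).congr_fderiv ?_
  ext v
  simp only [Nat.add_one_sub_one, pow_one, nsmul_eq_mul, Nat.cast_ofNat, map_smul,
    smul_apply, InnerProductSpace.toDual_apply_apply, smul_eq_mul]
  ring

theorem hasFDerivAt_inner_apply_self_smul (hA : (A : E →ₗ[ℝ] E).IsSymmetric) (x : E) :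
    HasFDerivAt (fun y ↦ (4 * ⟪A y, y⟫) • A y)
      ((4 * ⟪A x, x⟫) • A + (8 : ℝ) • InnerProductSpace.rankOne ℝ (A x) (A x)) x := by
  have hq := hasGradientAt_iff_hasFDerivAt.1 (hasGradientAt_inner_apply_self hA x)
  refine ((hq.const_mul 4).smul A.hasFDerivAt).congr_fderiv ?_
  ext v
  simp only [map_smul, smul_smul, add_apply, smul_apply,
    ContinuousLinearMap.smulRight_apply, InnerProductSpace.toDual_apply_apply, smul_eq_mul,
    InnerProductSpace.rankOne_apply, add_right_inj]
  ring_nf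

end Calculus

theorem euclideanLaplacian_fkm {E : Type*} [NormedAddCommGroup E] [InnerProductSpace ℝ E]
    [FiniteDimensional ℝ E] {ι : Type*} [Fintype ι] (P : ι → E →ₗ[ℝ] E)
    (hsymm : ∀ i, (P i).IsSymmetric) (hinv : ∀ i, Function.Involutive (P i))
    (htr : ∀ i, LinearMap.trace ℝ E (P i) = 0) (x : E) :
    euclideanLaplacian (fun x ↦ ‖x‖ ^ 4 - 2 * ∑ i, ⟪P i x, x⟫ ^ 2) x =
      (4 * Module.finrank ℝ E + 8 - 16 * Fintype.card ι) * ‖x‖ ^ 2 := by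
  let Q i := (P i).toContinuousLinearMap
  have hQ : ∀ i, (Q i : E →ₗ[ℝ] E).IsSymmetric := fun i ↦ by simpa [Q] using hsymm i
  have hid : (ContinuousLinearMap.id ℝ E : E →ₗ[ℝ] E).IsSymmetric := fun _ _ ↦ rfl
  have hF : (fun x ↦ ‖x‖ ^ 4 - 2 * ∑ i, ⟪P i x, x⟫ ^ 2) =
      fun x ↦ ⟪ContinuousLinearMap.id ℝ E x, x⟫ ^ 2 - 2 * ∑ i, ⟪Q i x, x⟫ ^ 2 := by
    funext x
    simp [Q, ← pow_mul]
  have hgrad : ∀ y, HasGradientAt (fun x ↦ ‖x‖ ^ 4 - 2 * ∑ i, ⟪P i x, x⟫ ^ 2)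
      ((4 * ⟪y, y⟫) • y - (2 : ℝ) • ∑ i, (4 * ⟪Q i y, y⟫) • Q i y) y := by
    intro y
    rw [hF, hasGradientAt_iff_hasFDerivAt]
    simpa [map_sum] using
      (hasGradientAt_iff_hasFDerivAt.1 (hasGradientAt_inner_apply_self_sq hid y)).fun_sub
        ((HasFDerivAt.fun_sum (u := Finset.univ) fun i _ ↦
          hasGradientAt_iff_hasFDerivAt.1 (hasGradientAt_inner_apply_self_sq (hQ i) y)).const_mul 2)
  have hhess := (hasFDerivAt_inner_apply_self_smul hid x).fun_sub
      ((HasFDerivAt.fun_sum (u := Finset.univ) fun i _ ↦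
        hasFDerivAt_inner_apply_self_smul (hQ i) x).fun_const_smul (2 : ℝ))
  rw [euclideanLaplacian_eq_trace hgrad (by simpa using hhess)]
  simp only [LinearMap.coe_toContinuousLinearMap', ContinuousLinearMap.toLinearMap_sub,
    ContinuousLinearMap.toLinearMap_add, ContinuousLinearMap.toLinearMap_smul,
    ContinuousLinearMap.coe_id, ContinuousLinearMap.toLinearMap_sum,
    LinearMap.coe_toContinuousLinearMap, map_sub, map_add, map_smul, map_sum, LinearMap.trace_id,
    smul_eq_mul, InnerProductSpace.trace_rankOne, inner_self_eq_norm_sq_to_K, Real.ringHom_apply,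
    htr, mul_zero, fun i ↦ (hsymm i).norm_map_of_involutive (hinv i), zero_add, Finset.sum_const,
    Finset.card_univ, nsmul_eq_mul, Q]
  ring

theorem fkm_second_cartan_munzner_general {l m : ℕ} (hm : 1 ≤ m)
    (P : Fin (m + 1) →
      (EuclideanSpace ℝ (Fin (2 * l)) →ₗ[ℝ] EuclideanSpace ℝ (Fin (2 * l))))
    (hsymm : ∀ i, (P i).IsSymmetric)
    (hcliff : ∀ i j, P i ∘ₗ P j + P j ∘ₗ P i =
      if i = j then (2 : ℝ) • (LinearMap.id :
        EuclideanSpace ℝ (Fin (2 * l)) →ₗ[ℝ] EuclideanSpace ℝ (Fin (2 * l))) else 0)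
    (F : EuclideanSpace ℝ (Fin (2 * l)) → ℝ)
    (hF : ∀ x, F x = ‖x‖ ^ 4 - 2 * ∑ i, ⟪P i x, x⟫ ^ 2) :
    ∀ x, euclideanLaplacian F x = 8 * ((l : ℝ) - 2 * m - 1) * ‖x‖ ^ 2 := by
  intro x
  have hsq : ∀ i, P i * P i = 1 := fun i ↦ by
    have h := hcliff i i
    rw [if_pos rfl, ← two_smul ℝ (P i ∘ₗ P i)] at h
    exact smul_right_injective _ two_ne_zero h
  have htr : ∀ i, LinearMap.trace ℝ _ (P i) = 0 := fun i ↦ by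
    have : Nontrivial (Fin (m + 1)) := Fin.nontrivial_iff_two_le.2 (by omega)
    obtain ⟨j, hji⟩ := exists_ne i
    exact LinearMap.trace_eq_zero_of_mul_eq_neg_mul (hsq j)
      (eq_neg_of_add_eq_zero_left ((hcliff i j).trans (if_neg hji.symm)))
  rw [funext hF, euclideanLaplacian_fkm P hsymm (fun i ↦ LinearMap.congr_fun (hsq i)) htr,
    finrank_euclideanSpace_fin, Fintype.card_fin]
  push_cast
  ring

/-- The FKM polynomial of a symmetric Clifford system satisfies the second
Cartan–Münzner equation for `g = 4` with multiplicities `(m₁, m₂) = (m, l - m - 1)`: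
`ΔF(x) = 8 (l - 2m - 1) |x|²`. -/
theorem fkm_second_cartan_munzner {l m : ℕ} (hl : 1 ≤ l) (hm : 1 ≤ m)
    (P : Fin (m + 1) →
      (EuclideanSpace ℝ (Fin (2 * l)) →ₗ[ℝ] EuclideanSpace ℝ (Fin (2 * l))))
    (hsymm : ∀ i, (P i).IsSymmetric)
    (hcliff : ∀ i j, P i ∘ₗ P j + P j ∘ₗ P i =
      if i = j then (2 : ℝ) • (LinearMap.id :
        EuclideanSpace ℝ (Fin (2 * l)) →ₗ[ℝ] EuclideanSpace ℝ (Fin (2 * l))) else 0)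
    (F : EuclideanSpace ℝ (Fin (2 * l)) → ℝ)
    (hF : ∀ x, F x = ‖x‖ ^ 4 - 2 * ∑ i, ⟪P i x, x⟫ ^ 2) :
    ∀ x, euclideanLaplacian F x = 8 * ((l : ℝ) - 2 * m - 1) * ‖x‖ ^ 2 :=
  fkm_second_cartan_munzner_general hm P hsymm hcliff F hF
end

section
/- Let P₀, P₁, …, P_m be a symmetric Clifford system on ℝ^{2l}, F(x) = |x|⁴ − 2∑_{i=0}^{m} ⟨P_i x, x⟩² the FKM polynomial, and x ∈ ℝ^{2l} a unit vector. Then F(x) = −1 if and only if x = ∑_{i=0}^{m} ⟨P_i x, x⟩ P_i x, i.e. if and only if x lies in the span of {P₀x, …, P_mx}. (This identifies the focal submanifold M₋ = f^{−1}(−1) with the set N_m = {x ∈ S^{2l−1}(1) : ∑_{i=0}^{m} ⟨P_i x, x⟩² = 1}.) -/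
open RealInnerProductSpace

/-- For a unit vector `x`, the FKM polynomial satisfies `F(x) = -1` if and only if
`x = ∑ᵢ ⟪Pᵢx, x⟫ Pᵢx`, i.e. `x` lies in the span of `{P₀x, …, P_mx}`.  This
identifies the focal submanifold `M₋ = f⁻¹(-1)` with
`{x ∈ S^{2l-1} : ∑ᵢ ⟪Pᵢx, x⟫² = 1}`. -/
theorem fkm_focal_Mminus {l m : ℕ}
    (P : Fin (m + 1) →
      (EuclideanSpace ℝ (Fin (2 * l)) →ₗ[ℝ] EuclideanSpace ℝ (Fin (2 * l))))
    (hsymm : ∀ i, (P i).IsSymmetric)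
    (hcliff : ∀ i j, P i ∘ₗ P j + P j ∘ₗ P i =
      if i = j then (2 : ℝ) • (LinearMap.id :
        EuclideanSpace ℝ (Fin (2 * l)) →ₗ[ℝ] EuclideanSpace ℝ (Fin (2 * l))) else 0)
    (F : EuclideanSpace ℝ (Fin (2 * l)) → ℝ)
    (hF : ∀ x, F x = ‖x‖ ^ 4 - 2 * ∑ i, ⟪P i x, x⟫ ^ 2)
    (x : EuclideanSpace ℝ (Fin (2 * l))) (hx : ‖x‖ = 1) :
    F x = -1 ↔ x = ∑ i, ⟪P i x, x⟫ • P i x := by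
  set c : Fin (m + 1) → ℝ := fun i => ⟪P i x, x⟫ with hc
  have horth : ∀ i j, ⟪P i x, P j x⟫ = if i = j then 1 else 0 := by
    intro i j
    have h := congrArg (fun T : EuclideanSpace ℝ (Fin (2 * l)) →ₗ[ℝ]
        EuclideanSpace ℝ (Fin (2 * l)) => ⟪T x, x⟫) (hcliff i j)
    simp only [LinearMap.add_apply, LinearMap.comp_apply, inner_add_left] at h
    rw [hsymm i (P j x) x, hsymm j (P i x) x, real_inner_comm ((P j) x) ((P i) x)] at h
    have hxx : ⟪x, x⟫ = (1 : ℝ) := by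
      rw [real_inner_self_eq_norm_sq, hx]; norm_num
    by_cases hij : i = j
    · rw [if_pos hij] at h
      simp only [LinearMap.smul_apply, LinearMap.id_apply, real_inner_smul_left, hxx] at h
      rw [if_pos hij]; linarith [real_inner_comm ((P j) x) ((P i) x)]
    · rw [if_neg hij] at h
      simp only [LinearMap.zero_apply, inner_zero_left] at h
      rw [if_neg hij]; linarith [real_inner_comm ((P j) x) ((P i) x)]
  set y : EuclideanSpace ℝ (Fin (2 * l)) := ∑ i, c i • P i x with hy
  have hxy : ⟪x, y⟫ = ∑ i, c i ^ 2 := by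
    rw [hy, inner_sum]
    refine Finset.sum_congr rfl fun i _ => ?_
    rw [real_inner_smul_right, real_inner_comm, sq]
  have hyy : ⟪y, y⟫ = ∑ i, c i ^ 2 := by
    rw [hy, inner_sum]
    refine Finset.sum_congr rfl fun j _ => ?_
    rw [real_inner_smul_right, sum_inner]
    have : ∀ i ∈ Finset.univ, ⟪c i • P i x, P j x⟫ = if i = j then c i else 0 := by
      intro i _
      rw [real_inner_smul_left, horth i j]
      split <;> simp
    rw [Finset.sum_congr rfl this, Finset.sum_ite_eq' Finset.univ j c]
    simp [sq]
  have hdist : ‖x - y‖ ^ 2 = 1 - ∑ i, c i ^ 2 := by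
    have hny : ‖y‖ ^ 2 = ∑ i, c i ^ 2 := by
      rw [← real_inner_self_eq_norm_sq]; exact hyy
    rw [norm_sub_sq_real, hxy, hx, hny]; ring
  have hFx : F x = -1 ↔ ∑ i, c i ^ 2 = 1 := by
    rw [hF x, hx]
    constructor <;> intro h <;> [linarith; (rw [show ∑ i, ⟪P i x, x⟫ ^ 2 = ∑ i, c i ^ 2 from rfl, h]; norm_num)]
  rw [hFx]
  constructor
  · intro h
    have : ‖x - y‖ ^ 2 = 0 := by rw [hdist, h]; ring
    have := pow_eq_zero_iff (n := 2) (by norm_num) |>.mp this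
    have := norm_eq_zero.mp this
    have := sub_eq_zero.mp this
    exact this
  · intro h
    have : ‖x - y‖ ^ 2 = 0 := by rw [← h]; simp
    rw [hdist] at this; linarith
end

section
/- Let P₀, P₁, …, P_m be a symmetric Clifford system on ℝ^{2l}, fix an index k, and let φ(x) = (x + P_k x)/√2. Then for every x ∈ ℝ^{2l} and every index j ≠ k one has ⟨P_j φ(x), φ(x)⟩ = 0. In particular the focal map φ sends the set M_{i+1} = {x ∈ S^{2l−1}(1) : ⟨P₀x,x⟩ = ⋯ = ⟨P_{i+1}x,x⟩ = 0} (with k = i+1) into the set where all quadratic forms ⟨P_jx, x⟩ with j ≠ i+1 vanish. -/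
open RealInnerProductSpace

/-- For a symmetric Clifford system `P₀, …, P_m` on `ℝ^{2l}`, a fixed index `k`,
and the focal map `φ(x) = (x + P_k x)/√2`, one has `⟪P_j φ(x), φ(x)⟫ = 0` for
every `x` and every index `j ≠ k`. -/
theorem focal_map_kills_other_quadratic_forms {l m : ℕ}
    (P : Fin (m + 1) →
      (EuclideanSpace ℝ (Fin (2 * l)) →ₗ[ℝ] EuclideanSpace ℝ (Fin (2 * l))))
    (hsymm : ∀ i, (P i).IsSymmetric)
    (hcliff : ∀ i j, P i ∘ₗ P j + P j ∘ₗ P i =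
      if i = j then (2 : ℝ) • (LinearMap.id :
        EuclideanSpace ℝ (Fin (2 * l)) →ₗ[ℝ] EuclideanSpace ℝ (Fin (2 * l))) else 0)
    (k : Fin (m + 1)) :
    ∀ x : EuclideanSpace ℝ (Fin (2 * l)), ∀ j, j ≠ k →
      ⟪P j ((Real.sqrt 2)⁻¹ • (x + P k x)), (Real.sqrt 2)⁻¹ • (x + P k x)⟫ = 0 := by
  intro x j hjk
  -- P k is an involution
  have h2 : ∀ v, P k (P k v) = v := by
    intro v
    have h := congrArg (fun f : EuclideanSpace ℝ (Fin (2 * l)) →ₗ[ℝ] _ => f v)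
      (hcliff k k)
    simp only [if_pos rfl, LinearMap.add_apply, LinearMap.comp_apply,
      LinearMap.smul_apply, LinearMap.id_apply] at h
    have h' : (2 : ℝ) • (P k (P k v)) = (2 : ℝ) • v := by
      rw [two_smul]; exact h
    exact smul_right_injective _ (two_ne_zero) h'
  -- anticommutation: P k ∘ P j = - P j ∘ P k
  have hanti : ∀ v, P k (P j v) = - P j (P k v) := by
    intro v
    have h := congrArg (fun f : EuclideanSpace ℝ (Fin (2 * l)) →ₗ[ℝ] _ => f v)
      (hcliff j k)
    simp only [if_neg hjk, LinearMap.add_apply, LinearMap.comp_apply,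
      LinearMap.zero_apply] at h
    exact eq_neg_of_add_eq_zero_left (by rw [add_comm]; exact h)
  have e3 : ⟪P j x, P k x⟫ = -⟪P j (P k x), x⟫ := by
    rw [← hsymm k (P j x) x, hanti x, inner_neg_left]
  have e4 : ⟪P j (P k x), P k x⟫ = -⟪P j x, x⟫ := by
    rw [← hsymm k (P j (P k x)) x, hanti (P k x), h2 x, inner_neg_left]
  rw [map_smul, real_inner_smul_left, real_inner_smul_right, map_add,
    inner_add_left, inner_add_right, inner_add_right, e3, e4]
  ring
end
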